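/- Let M ≥ 1, g : Fin M → ℝ with g_m ≥ 0 for all m, and let z ∈ ℂ satisfy max(2·max_m g_m − Σ_m g_m, 0) ≤ |z| ≤ Σ_m g_m. Then there exist phases φ : Fin M → ℝ such that Σ_m g_m · exp(i φ_m) = z. Hence the set {Σ_m g_m exp(i φ_m) : φ ∈ ℝ^M} is exactly the closed annulus {z ∈ ℂ : max(2·max_m g_m − Σ_m g_m, 0) ≤ |z| ≤ Σ_m g_m}. -/

import Mathlib

/-!
Induction on the number of arms. Given `z` in the annulus of `insert a s`, choose a length `b`
for the arms of `s` that lies in their annulus and satisfies `|g a - b| ≤ ‖z‖ ≤ g a + b`; the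
triangle with sides `g a`, `b`, `‖z‖` then exists (law of cosines), so `z = u + v` with
`‖u‖ = g a` and `‖v‖ = b`, and `v` is reached by induction. The converse inclusion is the
triangle inequality, applied once to the whole sum and once to the sum with one arm singled out.
-/

open Complex Finset

theorem exists_norm_eq_norm_sub_eq {a b : ℝ} {z : ℂ} (h₁ : |a - b| ≤ ‖z‖) (h₂ : ‖z‖ ≤ a + b) :
    ∃ u : ℂ, ‖u‖ = a ∧ ‖z - u‖ = b := by
  obtain ⟨hab, hba⟩ := abs_sub_le_iff.1 h₁
  have ha : 0 ≤ a := by linarith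
  have hb : 0 ≤ b := by linarith
  rcases eq_or_ne z 0 with rfl | hz
  · have hab : a = b := by simp only [norm_zero] at hab hba; linarith
    exact ⟨a, Complex.norm_of_nonneg ha, by rw [zero_sub, norm_neg, Complex.norm_of_nonneg ha, hab]⟩
  set r := ‖z‖
  have hr : 0 < r := norm_pos_iff.2 hz
  -- law of cosines: `c` is the projection of `u` on the direction of `z`, `h` the height
  set c := (r ^ 2 + a ^ 2 - b ^ 2) / (2 * r) with hc_def
  set h := √(a ^ 2 - c ^ 2)
  have hc : c ^ 2 ≤ a ^ 2 := by
    rw [hc_def, div_pow, div_le_iff₀ (by positivity)]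
    have hprod : 0 ≤ ((b - a + r) * (b + a - r)) * ((a + r - b) * (a + r + b)) :=
      mul_nonneg (mul_nonneg (by linarith) (by linarith)) (mul_nonneg (by linarith) (by linarith))
    nlinarith
  have hh : h ^ 2 = a ^ 2 - c ^ 2 := Real.sq_sqrt (by linarith)
  have hdir : ‖z / r‖ = 1 := by
    rw [norm_div, Complex.norm_of_nonneg hr.le, div_self hr.ne']
  refine ⟨z / r * (c + h * I), ?_, ?_⟩
  · rw [norm_mul, hdir, one_mul, norm_add_mul_I, hh, add_sub_cancel, Real.sqrt_sq ha]
  · have hsplit : z - z / r * (c + h * I) = z / r * ((r - c : ℝ) + (-h : ℝ) * I) := by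
      have hr' : (r : ℂ) ≠ 0 := ofReal_ne_zero.2 hr.ne'
      field_simp
      push_cast
      ring
    have hb2 : (r - c) ^ 2 + (-h) ^ 2 = b ^ 2 := by
      rw [neg_sq, hh, hc_def]
      field_simp
      ring
    rw [hsplit, norm_mul, hdir, one_mul, norm_add_mul_I, hb2, Real.sqrt_sq hb]

theorem norm_ofReal_mul_exp_mul_I {g : ℝ} (hg : 0 ≤ g) (φ : ℝ) : ‖(g : ℂ) * exp (φ * I)‖ = g := by
  rw [norm_mul, norm_exp_ofReal_mul_I, mul_one, Complex.norm_of_nonneg hg]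

theorem exists_ofReal_mul_exp_mul_I_eq {g : ℝ} {u : ℂ} (h : ‖u‖ = g) :
    ∃ φ : ℝ, (g : ℂ) * exp (φ * I) = u :=
  ⟨arg u, h ▸ norm_mul_exp_arg_mul_I u⟩

theorem two_mul_norm_sub_sum_norm_le_norm_sum {ι E : Type*} [SeminormedAddCommGroup E]
    [DecidableEq ι] {s : Finset ι} {i : ι} (hi : i ∈ s) (v : ι → E) :
    2 * ‖v i‖ - ∑ j ∈ s, ‖v j‖ ≤ ‖∑ j ∈ s, v j‖ := by
  rw [← add_sum_erase s v hi, ← add_sum_erase s (fun j => ‖v j‖) hi]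
  have h := norm_sub_le (v i + ∑ j ∈ s.erase i, v j) (∑ j ∈ s.erase i, v j)
  rw [add_sub_cancel_right] at h
  linarith [norm_sum_le (s.erase i) v]

theorem exists_sum_ofReal_mul_exp_mul_I_eq {ι : Type*} [DecidableEq ι] (s : Finset ι) {g : ι → ℝ}
    (hg : ∀ i ∈ s, 0 ≤ g i) {z : ℂ} (hlo : ∀ i ∈ s, 2 * g i - ∑ j ∈ s, g j ≤ ‖z‖)
    (hhi : ‖z‖ ≤ ∑ j ∈ s, g j) :
    ∃ φ : ι → ℝ, ∑ i ∈ s, (g i : ℂ) * exp (φ i * I) = z := by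
  induction s using Finset.induction_on generalizing z with
  | empty =>
    rw [sum_empty, norm_le_zero_iff] at hhi
    exact ⟨0, by rw [sum_empty, hhi]⟩
  | insert a s ha ih =>
    simp only [mem_insert, forall_eq_or_imp, sum_insert ha] at hg hlo hhi
    set A := g a
    set B := ∑ j ∈ s, g j
    set r := ‖z‖
    have hB : ∀ i ∈ s, g i ≤ B := fun i hi => single_le_sum hg.2 hi
    -- The remaining arms must span a vector of length in `[|A - r|, A + r]`; taking the upper end
    -- of this interval spares us the maximum of their own lower bounds.
    set b := min B (A + r)
    have hr : 0 ≤ r := norm_nonneg z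
    obtain ⟨u, hu, hzu⟩ := exists_norm_eq_norm_sub_eq (a := A) (b := b) (z := z)
      (abs_sub_le_iff.2 ⟨by grind, by grind⟩) (by grind)
    obtain ⟨α, rfl⟩ := exists_ofReal_mul_exp_mul_I_eq hu
    obtain ⟨φ, hφ⟩ := ih hg.2 (z := z - A * exp (α * I))
      (fun i hi => hzu ▸ le_min (by linarith [hB i hi]) (by linarith [hlo.2 i hi]))
      (hzu ▸ min_le_left _ _)
    refine ⟨Function.update φ a α, ?_⟩
    rw [sum_insert ha, Function.update_self, ← add_sub_cancel (↑A * exp (↑α * I)) z, ← hφ]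
    congr 1
    refine sum_congr rfl fun i hi => ?_
    rw [Function.update_of_ne (ne_of_mem_of_not_mem hi ha)]

theorem max_two_mul_iSup_sub_sum_le_iff {ι : Type*} [Fintype ι] (g : ι → ℝ) (r : ℝ) :
    max (2 * (⨆ i, g i) - ∑ i, g i) 0 ≤ r ↔ 0 ≤ r ∧ ∀ i, 2 * g i - ∑ j, g j ≤ r := by
  rw [max_le_iff, and_comm, and_congr_right_iff]
  intro hr
  rcases isEmpty_or_nonempty ι with _ | _
  · simp [hr]
  · have hiff : ∀ x, 2 * x - ∑ i, g i ≤ r ↔ x ≤ (r + ∑ i, g i) / 2 := fun x => by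
      constructor <;> intro <;> linarith
    simp only [hiff]
    exact ciSup_le_iff (Set.finite_range g).bddAbove

theorem sum_exp_annulus_reachable_general (M : ℕ)
    (g : Fin M → ℝ) (hg : ∀ m, 0 ≤ g m) (z : ℂ)
    (hzlo : max (2 * (⨆ m, g m) - ∑ m, g m) 0 ≤ ‖z‖)
    (hzhi : ‖z‖ ≤ ∑ m, g m) :
    (∃ φ : Fin M → ℝ, ∑ m, (g m : ℂ) * Complex.exp ((φ m : ℂ) * Complex.I) = z) ∧
    {w : ℂ | ∃ φ : Fin M → ℝ, ∑ m, (g m : ℂ) * Complex.exp ((φ m : ℂ) * Complex.I) = w}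
      = {w : ℂ | max (2 * (⨆ m, g m) - ∑ m, g m) 0 ≤ ‖w‖ ∧
          ‖w‖ ≤ ∑ m, g m} := by
  have hreach (w : ℂ) (hlo : max (2 * (⨆ m, g m) - ∑ m, g m) 0 ≤ ‖w‖) (hhi : ‖w‖ ≤ ∑ m, g m) :
      ∃ φ : Fin M → ℝ, ∑ m, (g m : ℂ) * exp (φ m * I) = w :=
    exists_sum_ofReal_mul_exp_mul_I_eq univ (fun m _ => hg m)
      (fun m _ => ((max_two_mul_iSup_sub_sum_le_iff g _).1 hlo).2 m) hhi
  refine ⟨hreach z hzlo hzhi, Set.ext fun w => ⟨?_, fun hw => hreach w hw.1 hw.2⟩⟩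
  rintro ⟨φ, rfl⟩
  have hnorm (m : Fin M) := norm_ofReal_mul_exp_mul_I (hg m) (φ m)
  refine ⟨(max_two_mul_iSup_sub_sum_le_iff g _).2 ⟨norm_nonneg _, fun m => ?_⟩, ?_⟩
  · simpa only [hnorm] using two_mul_norm_sub_sum_norm_le_norm_sum (mem_univ m)
      fun m => (g m : ℂ) * exp (φ m * I)
  · simpa only [hnorm] using norm_sum_le univ fun m => (g m : ℂ) * exp (φ m * I)

/-- Doughnut-region characterization: for `M ≥ 1` and nonnegative `g`, every `z` in
the closed annulus `max (2 max_m g_m - Σ_m g_m) 0 ≤ |z| ≤ Σ_m g_m` can be written as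
`Σ_m g_m exp(i φ_m)`; hence the set of such sums is exactly the annulus. -/
theorem sum_exp_annulus_reachable (M : ℕ) (hM : 1 ≤ M)
    (g : Fin M → ℝ) (hg : ∀ m, 0 ≤ g m) (z : ℂ)
    (hzlo : max (2 * (⨆ m, g m) - ∑ m, g m) 0 ≤ ‖z‖)
    (hzhi : ‖z‖ ≤ ∑ m, g m) :
    (∃ φ : Fin M → ℝ, ∑ m, (g m : ℂ) * Complex.exp ((φ m : ℂ) * Complex.I) = z) ∧
    {w : ℂ | ∃ φ : Fin M → ℝ, ∑ m, (g m : ℂ) * Complex.exp ((φ m : ℂ) * Complex.I) = w}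
      = {w : ℂ | max (2 * (⨆ m, g m) - ∑ m, g m) 0 ≤ ‖w‖ ∧
          ‖w‖ ≤ ∑ m, g m} :=
  sum_exp_annulus_reachable_general M g hg z hzlo hzhi
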